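/- Let M = A⊗A be the left A-module with action x·(a⊗b) := (x a)⊗b. The K-linear map ∇: A⊗A → A⊗(A⊗A) determined by ∇(a⊗b) = 1⊗(a⊗b) − a⊗(1⊗b) + a⊗(b⊗1) − (a b)⊗(1⊗1) is a flat connection on M with respect to the universal differential calculus, and the right A-action it induces is (a⊗b)·c = (a c)⊗b + (a(b c − c b))⊗1 for all a, b, c ∈ A. -/

import Mathlib

open TensorProduct

variable (K A M : Type*) [Field K] [Ring A] [Algebra K A]
  [AddCommGroup M] [Module K M] [Module A M] [IsScalarTower K A M]

/-- The action map `A ⊗ M → M`, `a ⊗ m ↦ a • m`. -/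
noncomputable def actMap : A ⊗[K] M →ₗ[K] M :=
  TensorProduct.lift (LinearMap.mk₂ K (fun a m => a • m)
    (fun a b m => add_smul a b m)
    (fun k a m => smul_assoc k a m)
    (fun a m n => smul_add a m n)
    (fun k a m => (smul_comm k a m).symm))

/-- Left multiplication by `a : A` on a left `A`-module, as a `K`-linear map. -/
def lsmulMap (a : A) : M →ₗ[K] M where
  toFun := fun m => a • m
  map_add' := fun x y => smul_add a x y
  map_smul' := fun k m => (smul_comm k a m).symm

/-- `a ↦ a • n` as a `K`-linear map `A → M`. -/
def smulBy (n : M) : A →ₗ[K] M where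
  toFun := fun a => a • n
  map_add' := fun a b => add_smul a b n
  map_smul' := fun k a => smul_assoc k a n

/-- `D : M → A ⊗ M` is a connection with respect to the universal differential
calculus. -/
def IsConnection (D : M →ₗ[K] A ⊗[K] M) : Prop :=
  (∀ m : M, actMap K A M (D m) = 0) ∧
  ∀ (a : A) (m : M),
    D (a • m) = LinearMap.rTensor M (LinearMap.mulLeft K a) (D m)
      + (1 : A) ⊗ₜ[K] (a • m) - a ⊗ₜ[K] m

/-- Flatness of a connection: `Σ 1 ⊗ m_A ⊗ m_M = Σ m_A ⊗ D(m_M)`. -/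
def IsFlatConnection (D : M →ₗ[K] A ⊗[K] M) : Prop :=
  ∀ m : M, (1 : A) ⊗ₜ[K] (D m) = LinearMap.lTensor A D (D m)

/-- The induced right operation `m·a := a m − Σ m_A a m_M`. -/
noncomputable def rop (D : M →ₗ[K] A ⊗[K] M) (m : M) (a : A) : M :=
  a • m - actMap K A M (LinearMap.rTensor M (LinearMap.mulRight K a) (D m))

/-- The map `A ⊗ A → A ⊗ (A ⊗ A)` given by
`a ⊗ b ↦ 1⊗(a⊗b) − a⊗(1⊗b) + a⊗(b⊗1) − (a b)⊗(1⊗1)`. -/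
noncomputable def nablaGrp : A ⊗[K] A →ₗ[K] A ⊗[K] (A ⊗[K] A) :=
  TensorProduct.lift (LinearMap.mk₂ K
    (fun a b => (1 : A) ⊗ₜ[K] (a ⊗ₜ[K] b) - a ⊗ₜ[K] ((1 : A) ⊗ₜ[K] b)
      + a ⊗ₜ[K] (b ⊗ₜ[K] (1 : A)) - (a * b) ⊗ₜ[K] ((1 : A) ⊗ₜ[K] (1 : A)))
    (fun a₁ a₂ b => by
      simp only [TensorProduct.add_tmul, TensorProduct.tmul_add, add_mul]
      abel)
    (fun k a b => by
      simp only [smul_mul_assoc, ← TensorProduct.smul_tmul', TensorProduct.tmul_smul,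
        smul_sub, smul_add])
    (fun a b₁ b₂ => by
      simp only [TensorProduct.add_tmul, TensorProduct.tmul_add, mul_add]
      abel)
    (fun k a b => by
      simp only [mul_smul_comm, ← TensorProduct.smul_tmul', TensorProduct.tmul_smul,
        smul_sub, smul_add]))

section NablaGrp

variable {K A M}

lemma nablaGrp_tmul (a b : A) :
    nablaGrp K A (a ⊗ₜ[K] b)
      = (1 : A) ⊗ₜ[K] (a ⊗ₜ[K] b) - a ⊗ₜ[K] ((1 : A) ⊗ₜ[K] b)
        + a ⊗ₜ[K] (b ⊗ₜ[K] (1 : A)) - (a * b) ⊗ₜ[K] ((1 : A) ⊗ₜ[K] (1 : A)) := rfl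

lemma actMap_tmul (a : A) (m : M) : actMap K A M (a ⊗ₜ[K] m) = a • m := rfl

lemma smul_tmul_eq_mul_tmul (x a b : A) : x • (a ⊗ₜ[K] b) = (x * a) ⊗ₜ[K] b := rfl

lemma actMap_nablaGrp (m : A ⊗[K] A) : actMap K A (A ⊗[K] A) (nablaGrp K A m) = 0 := by
  suffices (actMap K A (A ⊗[K] A)).comp (nablaGrp K A) = 0 from LinearMap.congr_fun this m
  refine TensorProduct.ext' fun a b => ?_
  simp only [LinearMap.comp_apply, nablaGrp_tmul, map_sub, map_add, actMap_tmul,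
    smul_tmul_eq_mul_tmul, one_mul, mul_one, LinearMap.zero_apply]
  abel

lemma nablaGrp_smul (x : A) (m : A ⊗[K] A) :
    nablaGrp K A (x • m) = LinearMap.rTensor (A ⊗[K] A) (LinearMap.mulLeft K x) (nablaGrp K A m)
      + (1 : A) ⊗ₜ[K] (x • m) - x ⊗ₜ[K] m := by
  suffices (nablaGrp K A).comp (lsmulMap K A (A ⊗[K] A) x)
      = (LinearMap.rTensor (A ⊗[K] A) (LinearMap.mulLeft K x)).comp (nablaGrp K A)
        + (TensorProduct.mk K A (A ⊗[K] A) 1).comp (lsmulMap K A (A ⊗[K] A) x)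
        - TensorProduct.mk K A (A ⊗[K] A) x from LinearMap.congr_fun this m
  refine TensorProduct.ext' fun a b => ?_
  simp only [LinearMap.comp_apply, LinearMap.add_apply, LinearMap.sub_apply, lsmulMap,
    LinearMap.coe_mk, AddHom.coe_mk, TensorProduct.mk_apply, smul_tmul_eq_mul_tmul,
    nablaGrp_tmul, map_sub, map_add, LinearMap.rTensor_tmul, LinearMap.mulLeft_apply,
    mul_one, mul_assoc]
  abel

lemma tmul_nablaGrp_eq_lTensor_nablaGrp (m : A ⊗[K] A) :
    (1 : A) ⊗ₜ[K] nablaGrp K A m = LinearMap.lTensor A (nablaGrp K A) (nablaGrp K A m) := by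
  suffices (TensorProduct.mk K A _ 1).comp (nablaGrp K A)
      = (LinearMap.lTensor A (nablaGrp K A)).comp (nablaGrp K A) from LinearMap.congr_fun this m
  refine TensorProduct.ext' fun a b => ?_
  simp only [LinearMap.comp_apply, TensorProduct.mk_apply, nablaGrp_tmul, map_sub, map_add,
    LinearMap.lTensor_tmul, TensorProduct.tmul_sub, TensorProduct.tmul_add, one_mul, mul_one]
  abel

lemma rop_nablaGrp_tmul (a b c : A) :
    rop K A (A ⊗[K] A) (nablaGrp K A) (a ⊗ₜ[K] b) c
      = (a * c) ⊗ₜ[K] b + (a * (b * c - c * b)) ⊗ₜ[K] (1 : A) := by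
  simp only [rop, nablaGrp_tmul, map_sub, map_add, LinearMap.rTensor_tmul,
    LinearMap.mulRight_apply, actMap_tmul, smul_tmul_eq_mul_tmul, one_mul, mul_one,
    mul_sub, mul_assoc, TensorProduct.sub_tmul]
  abel

end NablaGrp

/-- On the left `A`-module `M = A ⊗ A` (action on the first factor),
the map `a⊗b ↦ 1⊗(a⊗b) − a⊗(1⊗b) + a⊗(b⊗1) − (ab)⊗(1⊗1)` is a flat connection with
respect to the universal differential calculus, and the right `A`-action it induces is
`(a⊗b)·c = (a c)⊗b + (a(b c − c b))⊗1`. -/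
theorem nablaGrp_flat_connection_and_induced_action :
    IsConnection K A (A ⊗[K] A) (nablaGrp K A) ∧
    IsFlatConnection K A (A ⊗[K] A) (nablaGrp K A) ∧
    ∀ a b c : A,
      rop K A (A ⊗[K] A) (nablaGrp K A) (a ⊗ₜ[K] b) c
        = (a * c) ⊗ₜ[K] b + (a * (b * c - c * b)) ⊗ₜ[K] (1 : A) :=
  ⟨⟨actMap_nablaGrp, nablaGrp_smul⟩, tmul_nablaGrp_eq_lTensor_nablaGrp, rop_nablaGrp_tmul⟩
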